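/- arXiv:2012.11035 — 2 statements merged into one kernel-verified Lean document; each statement's English description precedes it below -/
import Mathlib

section
/- Let D, W ⊆ ℝ^d, let K be a Markov kernel from D to probability measures on W, and let γ ≥ 1. Then for any two probability measures μ, ν on D, E_γ(μK‖νK) ≤ E_γ(μ‖ν) · sup_{w₁,w₂ ∈ D} E_γ(K(w₁)‖K(w₂)). -/
/-!
Fix a measurable `A ⊆ W` and put `f w = K(w)(A)`, so that `μK(A) − γ·νK(A) = ∫ f dμ − γ ∫ f dν`.
Splitting `D` along a Hahn decomposition of `μ − γν` shows that this is at most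
`E_γ(μ‖ν)·(sup f − inf f) + (1 − γ)·inf f`, which is at most `E_γ(μ‖ν)·(sup f − γ·inf f)`
because `E_γ(μ‖ν) ≤ 1 ≤ γ`. Finally `sup f − γ·inf f` is the supremum of
`K(w₁)(A) − γ·K(w₂)(A) ≤ E_γ(K(w₁)‖K(w₂))`.
-/

open MeasureTheory ProbabilityTheory Real

/-- The hockey-stick (`E_γ`) divergence: `E_γ(μ‖ν) = sup_A [μ(A) − γ·ν(A)]`,
the supremum over all measurable sets `A`. -/
noncomputable def Egamma {α : Type*} [MeasurableSpace α] (γ : ℝ) (μ ν : Measure α) : ℝ :=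
  ⨆ (A : Set α) (_ : MeasurableSet A), ((μ A).toReal - γ * (ν A).toReal)

lemma iSup_sub_mul_iInf_le {ι : Type*} [Nonempty ι] {f : ι → ℝ} {γ C : ℝ} (hγ : 0 ≤ γ)
    (h : ∀ i j, f i - γ * f j ≤ C) : (⨆ i, f i) - γ * ⨅ i, f i ≤ C := by
  suffices ∀ i, f i - C ≤ γ * ⨅ j, f j by
    linarith [ciSup_le fun i => (sub_le_iff_le_add.mp (this i)).trans_eq (add_comm _ _)]
  intro i
  rw [Real.mul_iInf_of_nonneg hγ]
  exact le_ciInf fun j => by linarith [h i j]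

lemma Measure.toReal_bind_apply {α β : Type*} [MeasurableSpace α] [MeasurableSpace β]
    {μ : Measure α} {K : α → Measure β} [∀ a, IsFiniteMeasure (K a)] (hK : AEMeasurable K μ)
    {A : Set β} (hA : MeasurableSet A) :
    ((μ.bind K) A).toReal = ∫ a, (K a A).toReal ∂μ := by
  rw [Measure.bind_apply hA hK]
  exact (integral_toReal ((Measure.measurable_coe hA).comp_aemeasurable hK)
    (ae_of_all _ fun a => measure_lt_top _ _)).symm

lemma integrable_of_le_of_le {α : Type*} [MeasurableSpace α] {μ : Measure α}
    [IsFiniteMeasure μ] {f : α → ℝ} {a b : ℝ} (hf : Measurable f) (hbf : ∀ x, b ≤ f x)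
    (hfa : ∀ x, f x ≤ a) : Integrable f μ :=
  .of_bound hf.aestronglyMeasurable (max |b| |a|)
    (ae_of_all _ fun x => abs_le_max_abs_abs (hbf x) (hfa x))

section Egamma

variable {α : Type*} [MeasurableSpace α] {γ : ℝ} {μ ν : Measure α}

lemma Egamma_le_of_forall {c : ℝ}
    (h : ∀ A, MeasurableSet A → (μ A).toReal - γ * (ν A).toReal ≤ c) : Egamma γ μ ν ≤ c := by
  have hc : 0 ≤ c := by simpa using h ∅ .empty
  exact Real.iSup_le (fun A => Real.iSup_le (h A) hc) hc

lemma toReal_sub_mul_toReal_le_measureReal_univ [IsFiniteMeasure μ] (hγ : 0 ≤ γ) (A : Set α) :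
    (μ A).toReal - γ * (ν A).toReal ≤ μ.real Set.univ := by
  have hA : μ.real A ≤ μ.real Set.univ := measureReal_mono (Set.subset_univ A)
  rw [measureReal_def] at hA
  linarith [mul_nonneg hγ (ν A).toReal_nonneg]

lemma le_Egamma [IsFiniteMeasure μ] (hγ : 0 ≤ γ) {A : Set α} (hA : MeasurableSet A) :
    (μ A).toReal - γ * (ν A).toReal ≤ Egamma γ μ ν := by
  refine le_ciSup_of_le ⟨μ.real Set.univ, ?_⟩ A
    (ciSup_pos (f := fun _ : MeasurableSet A => (μ A).toReal - γ * (ν A).toReal) hA).ge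
  rintro _ ⟨B, rfl⟩
  exact Real.iSup_le (fun _ => toReal_sub_mul_toReal_le_measureReal_univ hγ B) measureReal_nonneg

lemma Egamma_nonneg [IsFiniteMeasure μ] (hγ : 0 ≤ γ) : 0 ≤ Egamma γ μ ν := by
  simpa using le_Egamma (μ := μ) (ν := ν) hγ .empty

lemma Egamma_le_one [IsProbabilityMeasure μ] (hγ : 0 ≤ γ) : Egamma γ μ ν ≤ 1 := by
  simpa using Egamma_le_of_forall fun A _ =>
    toReal_sub_mul_toReal_le_measureReal_univ (μ := μ) (ν := ν) hγ A

lemma integral_sub_mul_integral_le_Egamma_mul [IsFiniteMeasure μ] [IsFiniteMeasure ν]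
    (hγ : 0 ≤ γ) {g : α → ℝ} {M : ℝ} (hg : Measurable g) (hg0 : ∀ x, 0 ≤ g x)
    (hgM : ∀ x, g x ≤ M) (hM : 0 ≤ M) :
    ∫ x, g x ∂μ - γ * ∫ x, g x ∂ν ≤ Egamma γ μ ν * M := by
  set γν := ENNReal.ofReal γ • ν
  have : IsFiniteMeasure γν := ν.smul_finite ENNReal.ofReal_ne_top
  have hγν : ∀ (h : α → ℝ) (s : Set α), ∫ x in s, h x ∂γν = γ * ∫ x in s, h x ∂ν := fun h s => by
    rw [Measure.restrict_smul, integral_smul_measure, ENNReal.toReal_ofReal hγ, smul_eq_mul]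
  have hint : ∀ (ρ : Measure α) [IsFiniteMeasure ρ], Integrable g ρ :=
    fun ρ _ => integrable_of_le_of_le hg hg0 hgM
  obtain ⟨S, hS, hle, hge⟩ := exists_isHahnDecomposition γν μ
  have hSc_le : ∫ x in Sᶜ, g x ∂μ ≤ ∫ x in Sᶜ, g x ∂γν :=
    integral_mono_measure hge (ae_of_all _ hg0) (hint _)
  have hS_le : ∫ x in S, (M - g x) ∂γν ≤ ∫ x in S, (M - g x) ∂μ :=
    integral_mono_measure hle (ae_of_all _ fun x => sub_nonneg.mpr (hgM x))
      (integrable_of_le_of_le (measurable_const.sub hg) (fun x => sub_nonneg.mpr (hgM x))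
        (fun x => sub_le_self M (hg0 x)))
  rw [integral_sub (integrable_const M) (hint _), integral_sub (integrable_const M) (hint _),
    setIntegral_const, setIntegral_const, hγν] at hS_le
  rw [hγν] at hSc_le
  have hsplit : ∀ (ρ : Measure α) [IsFiniteMeasure ρ],
      ∫ x, g x ∂ρ = ∫ x in S, g x ∂ρ + ∫ x in Sᶜ, g x ∂ρ :=
    fun ρ _ => (integral_add_compl hS (hint ρ)).symm
  have hS_Egamma : M * ((μ S).toReal - γ * (ν S).toReal) ≤ M * Egamma γ μ ν :=
    mul_le_mul_of_nonneg_left (le_Egamma hγ hS) hM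
  have hγνS : γν.real S = γ * (ν S).toReal := by
    simp [γν, measureReal_def, ENNReal.toReal_ofReal hγ]
  rw [hγνS, measureReal_def, smul_eq_mul, smul_eq_mul] at hS_le
  rw [hsplit μ, hsplit ν]
  linarith

lemma integral_sub_mul_integral_le_Egamma_mul_of_bounds [IsProbabilityMeasure μ]
    [IsProbabilityMeasure ν] (hγ : 1 ≤ γ) {f : α → ℝ} {a b : ℝ} (hf : Measurable f) (hb : 0 ≤ b)
    (hbf : ∀ x, b ≤ f x) (hfa : ∀ x, f x ≤ a) :
    ∫ x, f x ∂μ - γ * ∫ x, f x ∂ν ≤ Egamma γ μ ν * (a - γ * b) := by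
  obtain ⟨x₀⟩ := nonempty_of_isProbabilityMeasure μ
  have hγ0 : 0 ≤ γ := zero_le_one.trans hγ
  have hshift : ∀ (ρ : Measure α) [IsProbabilityMeasure ρ],
      ∫ x, (f x - b) ∂ρ = ∫ x, f x ∂ρ - b := fun ρ _ => by
      rw [integral_sub (integrable_of_le_of_le hf hbf hfa) (integrable_const b)]
      simp
  have key := integral_sub_mul_integral_le_Egamma_mul (μ := μ) (ν := ν) hγ0 (hf.sub_const b)
    (fun x => sub_nonneg.mpr (hbf x)) (fun x => sub_le_sub_right (hfa x) b)
    (sub_nonneg.mpr ((hbf x₀).trans (hfa x₀)))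
  rw [hshift μ, hshift ν] at key
  have hslack : 0 ≤ b * (γ - 1) * (1 - Egamma γ μ ν) :=
    mul_nonneg (mul_nonneg hb (sub_nonneg.mpr hγ)) (sub_nonneg.mpr (Egamma_le_one hγ0))
  linarith

end Egamma

/-- For `D, W ⊆ ℝ^d`, a Markov kernel `K` from `D` to probability
measures on `W`, `γ ≥ 1`, and any two probability measures `μ, ν` on `D`,
`E_γ(μK‖νK) ≤ E_γ(μ‖ν) · sup_{w₁,w₂ ∈ D} E_γ(K(w₁)‖K(w₂))`. -/
theorem Egamma_bind_le {d : ℕ}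
    (D W : Set (EuclideanSpace ℝ (Fin d)))
    (K : ↥D → Measure ↥W)
    (hKprob : ∀ w, IsProbabilityMeasure (K w))
    (hKmeas : Measurable K)
    (γ : ℝ) (hγ : 1 ≤ γ)
    (μ ν : Measure ↥D) [IsProbabilityMeasure μ] [IsProbabilityMeasure ν] :
    Egamma γ (μ.bind K) (ν.bind K) ≤
      Egamma γ μ ν * ⨆ p : ↥D × ↥D, Egamma γ (K p.1) (K p.2) := by
  have hγ0 : 0 ≤ γ := zero_le_one.trans hγ
  have : Nonempty D := nonempty_of_isProbabilityMeasure μ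
  have hK_le : ∀ w₁ w₂, Egamma γ (K w₁) (K w₂) ≤ ⨆ p : ↥D × ↥D, Egamma γ (K p.1) (K p.2) :=
    fun w₁ w₂ => le_ciSup (f := fun p : D × D => Egamma γ (K p.1) (K p.2))
      ⟨1, by rintro _ ⟨p, rfl⟩; exact Egamma_le_one hγ0⟩ (w₁, w₂)
  refine Egamma_le_of_forall fun A hA => ?_
  set f : D → ℝ := fun w => (K w A).toReal
  have hf : Measurable f := ((Measure.measurable_coe hA).comp hKmeas).ennreal_toReal
  have hf0 : ∀ w, 0 ≤ f w := fun w => ENNReal.toReal_nonneg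
  have hf1 : ∀ w, f w ≤ 1 := fun w => measureReal_le_one
  rw [Measure.toReal_bind_apply hKmeas.aemeasurable hA,
    Measure.toReal_bind_apply hKmeas.aemeasurable hA]
  calc ∫ w, f w ∂μ - γ * ∫ w, f w ∂ν ≤ Egamma γ μ ν * ((⨆ w, f w) - γ * ⨅ w, f w) :=
        integral_sub_mul_integral_le_Egamma_mul_of_bounds hγ hf (le_ciInf hf0)
          (ciInf_le ⟨0, by rintro _ ⟨w, rfl⟩; exact hf0 w⟩)
          (le_ciSup ⟨1, by rintro _ ⟨w, rfl⟩; exact hf1 w⟩)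
    _ ≤ _ := mul_le_mul_of_nonneg_left (iSup_sub_mul_iInf_le hγ0 fun w₁ w₂ =>
        (le_Egamma hγ0 hA).trans (hK_le w₁ w₂)) (Egamma_nonneg hγ0)
end

section
/- For every γ ≥ 1, the function r ↦ θ_γ(r) is nondecreasing on [0, ∞) and takes values in [0, 1]. -/
open MeasureTheory ProbabilityTheory Real

/-- The standard Gaussian tail function `Q(a) = (1/√(2π)) ∫_a^∞ e^{−u²/2} du`. -/
noncomputable def Qfun (a : ℝ) : ℝ :=
  (1 / Real.sqrt (2 * Real.pi)) * ∫ u in Set.Ici a, Real.exp (-u ^ 2 / 2)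

/-- `θ_γ(r) = Q(log γ / r − r/2) − γ·Q(log γ / r + r/2)` for `r > 0`, with `θ_γ(0) = 0`. -/
noncomputable def thetaGamma (γ r : ℝ) : ℝ :=
  if r = 0 then 0
  else Qfun (Real.log γ / r - r / 2) - γ * Qfun (Real.log γ / r + r / 2)

/-!
For `r > 0` write `a = log γ / r - r / 2` and `b = a + r`; the Gaussian density `φ` satisfies
`γ φ(b) = φ(a)`. Differentiating `θ_γ`, the terms in `a'` and `b'` therefore combine into
`φ(a) (b' - a') = φ(a) > 0`. Shifting the tail integral by `r` gives
`Q(a + r) ≤ e^{-(r a + r²/2)} Q(a) = Q(a) / γ`, so `θ_γ(r) ≥ 0 = θ_γ(0)`;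
and `θ_γ(r) ≤ Q(a) ≤ 1`.
-/

open Set

lemma integrable_exp_neg_sq_div_two : Integrable fun u : ℝ => exp (-u ^ 2 / 2) := by
  simpa [neg_div, div_eq_inv_mul] using integrable_exp_neg_mul_sq (b := 1 / 2) (by norm_num)

lemma integral_exp_neg_sq_div_two : ∫ u, exp (-u ^ 2 / 2) = √(2 * π) := by
  have h := integral_gaussian (1 / 2)
  rw [show π / (1 / 2) = 2 * π by ring] at h
  simpa [neg_div, div_eq_inv_mul] using h

lemma Qfun_nonneg (a : ℝ) : 0 ≤ Qfun a :=
  mul_nonneg (by positivity) (setIntegral_nonneg measurableSet_Ici fun u _ => (exp_pos _).le)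

lemma Qfun_le_one (a : ℝ) : Qfun a ≤ 1 := by
  have h : ∫ u in Ici a, exp (-u ^ 2 / 2) ≤ √(2 * π) :=
    integral_exp_neg_sq_div_two ▸
      setIntegral_le_integral integrable_exp_neg_sq_div_two (.of_forall fun u => (exp_pos _).le)
  calc Qfun a ≤ 1 / √(2 * π) * √(2 * π) := by unfold Qfun; gcongr
    _ = 1 := by field_simp

lemma hasDerivAt_Qfun (a : ℝ) : HasDerivAt Qfun (-(1 / √(2 * π) * exp (-a ^ 2 / 2))) a := by
  have hcont : Continuous fun u : ℝ => exp (-u ^ 2 / 2) := by fun_prop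
  have hsplit : Qfun = fun x => 1 / √(2 * π) *
      ((∫ u in Ici 0, exp (-u ^ 2 / 2)) - ∫ u in (0 : ℝ)..x, exp (-u ^ 2 / 2)) := by
    ext x
    rw [← intervalIntegral.integral_Ici_sub_Ici' integrable_exp_neg_sq_div_two.integrableOn
      integrable_exp_neg_sq_div_two.integrableOn, sub_sub_cancel, Qfun]
  rw [hsplit, ← mul_neg]
  exact ((hcont.integral_hasStrictDerivAt 0 a).hasDerivAt.const_sub _).const_mul _

lemma Qfun_add_le (a : ℝ) {r : ℝ} (hr : 0 ≤ r) :
    Qfun (a + r) ≤ exp (-(r * a + r ^ 2 / 2)) * Qfun a := by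
  have hshift :
      ∫ u in Ici (a + r), exp (-u ^ 2 / 2) = ∫ v in Ici a, exp (-(v + r) ^ 2 / 2) := by
    rw [← (measurePreserving_add_right volume r).setIntegral_preimage_emb
      (MeasurableEquiv.addRight r).measurableEmbedding, preimage_add_const_Ici,
      add_sub_cancel_right]
  have hbound : ∫ v in Ici a, exp (-(v + r) ^ 2 / 2) ≤
      ∫ v in Ici a, exp (-(r * a + r ^ 2 / 2)) * exp (-v ^ 2 / 2) := by
    refine setIntegral_mono_on (integrable_exp_neg_sq_div_two.comp_add_right r).integrableOn
      (integrable_exp_neg_sq_div_two.const_mul _).integrableOn measurableSet_Ici fun v hv => ?_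
    rw [← exp_add]
    gcongr
    nlinarith [mul_le_mul_of_nonneg_left (mem_Ici.1 hv) hr]
  calc Qfun (a + r)
      ≤ 1 / √(2 * π) * ∫ v in Ici a, exp (-(r * a + r ^ 2 / 2)) * exp (-v ^ 2 / 2) := by
        rw [Qfun, hshift]
        exact mul_le_mul_of_nonneg_left hbound (by positivity)
    _ = exp (-(r * a + r ^ 2 / 2)) * Qfun a := by rw [integral_const_mul, Qfun]; ring

lemma mul_Qfun_le_Qfun {γ r : ℝ} (hγ : 0 < γ) (hr : 0 < r) :
    γ * Qfun (log γ / r + r / 2) ≤ Qfun (log γ / r - r / 2) := by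
  have h := Qfun_add_le (log γ / r - r / 2) hr.le
  rwa [show log γ / r - r / 2 + r = log γ / r + r / 2 by ring,
    show r * (log γ / r - r / 2) + r ^ 2 / 2 = log γ by field_simp; ring,
    exp_neg, exp_log hγ, le_inv_mul_iff₀ hγ] at h

lemma mul_exp_neg_sq_div_two_log_div_add {γ r : ℝ} (hγ : 0 < γ) (hr : r ≠ 0) :
    γ * exp (-(log γ / r + r / 2) ^ 2 / 2) = exp (-(log γ / r - r / 2) ^ 2 / 2) := by
  rw [← exp_log hγ, ← exp_add, log_exp]
  congr 1
  field_simp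
  ring

lemma thetaGamma_zero (γ : ℝ) : thetaGamma γ 0 = 0 := if_pos rfl

lemma thetaGamma_of_ne_zero (γ : ℝ) {r : ℝ} (hr : r ≠ 0) :
    thetaGamma γ r = Qfun (log γ / r - r / 2) - γ * Qfun (log γ / r + r / 2) := if_neg hr

lemma hasDerivAt_thetaGamma {γ r : ℝ} (hγ : 0 < γ) (hr : r ≠ 0) :
    HasDerivAt (thetaGamma γ) (1 / √(2 * π) * exp (-(log γ / r - r / 2) ^ 2 / 2)) r := by
  have hL : HasDerivAt (fun x => log γ / x) (-(log γ / r ^ 2)) r := by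
    simpa [div_eq_mul_inv] using (hasDerivAt_inv hr).const_mul (log γ)
  have hhalf : HasDerivAt (fun x : ℝ => x / 2) (1 / 2) r := by
    simpa using (hasDerivAt_id r).div_const 2
  have h := ((hasDerivAt_Qfun _).comp r (hL.sub hhalf)).sub
    (((hasDerivAt_Qfun _).comp r (hL.add hhalf)).const_mul γ)
  refine (h.congr_of_eventuallyEq ((eventually_ne_nhds hr).mono fun x hx =>
    thetaGamma_of_ne_zero γ hx)).congr_deriv ?_
  linear_combination
    (1 / √(2 * π) * (1 / 2 - log γ / r ^ 2)) * mul_exp_neg_sq_div_two_log_div_add hγ hr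

lemma thetaGamma_nonneg {γ r : ℝ} (hγ : 0 < γ) (hr : 0 ≤ r) : 0 ≤ thetaGamma γ r := by
  rcases hr.eq_or_lt with rfl | hr
  · rw [thetaGamma_zero]
  · rw [thetaGamma_of_ne_zero γ hr.ne', sub_nonneg]
    exact mul_Qfun_le_Qfun hγ hr

lemma thetaGamma_le_one {γ : ℝ} (hγ : 0 ≤ γ) (r : ℝ) : thetaGamma γ r ≤ 1 := by
  unfold thetaGamma
  split_ifs
  · exact zero_le_one
  · linarith [Qfun_le_one (log γ / r - r / 2), mul_nonneg hγ (Qfun_nonneg (log γ / r + r / 2))]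

lemma strictMonoOn_thetaGamma {γ : ℝ} (hγ : 0 < γ) : StrictMonoOn (thetaGamma γ) (Ioi 0) := by
  refine strictMonoOn_of_hasDerivWithinAt_pos (convex_Ioi 0)
    (f' := fun r => 1 / √(2 * π) * exp (-(log γ / r - r / 2) ^ 2 / 2))
    (fun x hx => (hasDerivAt_thetaGamma hγ (ne_of_gt hx)).continuousAt.continuousWithinAt)
    (fun x hx => ?_) (fun x _ => by positivity)
  rw [interior_Ioi] at hx ⊢
  exact (hasDerivAt_thetaGamma hγ (ne_of_gt hx)).hasDerivWithinAt

lemma monotoneOn_thetaGamma {γ : ℝ} (hγ : 0 < γ) : MonotoneOn (thetaGamma γ) (Ici 0) := by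
  rintro x hx y hy hxy
  rcases (mem_Ici.1 hx).eq_or_lt with rfl | hx
  · rw [thetaGamma_zero]
    exact thetaGamma_nonneg hγ hy
  · exact (strictMonoOn_thetaGamma hγ).monotoneOn hx (hx.trans_le hxy) hxy

/-- For every `γ ≥ 1`, the function `r ↦ θ_γ(r)` is nondecreasing on
`[0, ∞)` and takes values in `[0, 1]`. -/
theorem thetaGamma_monotone_mem_Icc (γ : ℝ) (hγ : 1 ≤ γ) :
    MonotoneOn (thetaGamma γ) (Set.Ici 0) ∧
      ∀ r ∈ Set.Ici (0 : ℝ), thetaGamma γ r ∈ Set.Icc (0 : ℝ) 1 := by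
  have hγ₀ : 0 < γ := zero_lt_one.trans_le hγ
  exact ⟨monotoneOn_thetaGamma hγ₀,
    fun r hr => ⟨thetaGamma_nonneg hγ₀ hr, thetaGamma_le_one hγ₀.le r⟩⟩
end
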